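/- For all vector fields Y, Z on U: S̄(Y,Z) = S(Y,Z) − (n−2)(∇_Y π)(Z) + (n−2)π(Y)π(Z) − [(n−2)π(P) + div P]·g(Y,Z), where (∇_Y π)(Z) = g(∇_Y P, Z) and div P = Σᵢ g(∇_{Eᵢ} P, Eᵢ) for any local g-orthonormal frame (E₁,…,Eₙ). -/

import Mathlib

open scoped BigOperators

/-! Setup: an open set `U ⊆ ℝⁿ` with a Riemannian metric given by component functions
`g x i j`, the Levi-Civita connection computed from the Christoffel symbols, the
semi-symmetric metric connection `∇̄_X Y = ∇_X Y + π(Y)X − g(X,Y)P`, curvature and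
Ricci tensors of a connection, and covariant derivatives of `(0,2)`-tensors. -/

/-- A vector field on (an open subset of) `ℝⁿ`. -/
abbrev VF (n : ℕ) := (Fin n → ℝ) → Fin n → ℝ

/-- Partial derivative `∂ᵢ f` of a real-valued function. -/
noncomputable def pd {n : ℕ} (i : Fin n) (f : (Fin n → ℝ) → ℝ) (x : Fin n → ℝ) : ℝ :=
  fderiv ℝ f x (Pi.single i 1)

/-- The metric evaluated on two tangent vectors at the point `x`. -/
def gval {n : ℕ} (g : (Fin n → ℝ) → Fin n → Fin n → ℝ) (x v w : Fin n → ℝ) : ℝ :=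
  ∑ i, ∑ j, g x i j * v i * w j

/-- The Christoffel symbols `Γ^k_{ij} = ½ g^{kl}(∂ᵢ g_{jl} + ∂ⱼ g_{il} − ∂_l g_{ij})`. -/
noncomputable def christoffel {n : ℕ} (g : (Fin n → ℝ) → Fin n → Fin n → ℝ)
    (x : Fin n → ℝ) (k i j : Fin n) : ℝ :=
  (1 / 2) * ∑ l, (Matrix.of (g x))⁻¹ k l *
    (pd i (fun y => g y j l) x + pd j (fun y => g y i l) x - pd l (fun y => g y i j) x)

/-- The Levi-Civita covariant derivative `(∇_X Y)^k = X^i ∂ᵢ Y^k + Γ^k_{ij} X^i Y^j`. -/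
noncomputable def lcCov {n : ℕ} (g : (Fin n → ℝ) → Fin n → Fin n → ℝ)
    (X Y : VF n) (x : Fin n → ℝ) : Fin n → ℝ :=
  fun k => fderiv ℝ (fun y => Y y k) x (X x) +
    ∑ i, ∑ j, christoffel g x k i j * X x i * Y x j

/-- The semi-symmetric metric connection `∇̄_X Y = ∇_X Y + π(Y)X − g(X,Y)P`,
where `π(X) = g(X,P)`. -/
noncomputable def ssCov {n : ℕ} (g : (Fin n → ℝ) → Fin n → Fin n → ℝ)
    (P : VF n) (X Y : VF n) (x : Fin n → ℝ) : Fin n → ℝ :=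
  fun k => lcCov g X Y x k + gval g x (Y x) (P x) * X x k - gval g x (X x) (Y x) * P x k

/-- The Lie bracket of vector fields. -/
noncomputable def lie {n : ℕ} (X Y : VF n) (x : Fin n → ℝ) : Fin n → ℝ :=
  fun k => fderiv ℝ (fun y => Y y k) x (X x) - fderiv ℝ (fun y => X y k) x (Y x)

/-- The curvature `R_D(X,Y)Z = D_X D_Y Z − D_Y D_X Z − D_{[X,Y]}Z` of a connection `D`. -/
noncomputable def curv {n : ℕ} (D : VF n → VF n → VF n) (X Y Z : VF n)
    (x : Fin n → ℝ) : Fin n → ℝ :=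
  fun k => D X (D Y Z) x k - D Y (D X Z) x k - D (lie X Y) Z x k

/-- The Ricci tensor `Ric_D(Y,Z) = trace (X ↦ R_D(X,Y)Z)` of a connection `D`
(the trace computed in the coordinate frame). -/
noncomputable def ricci {n : ℕ} (D : VF n → VF n → VF n) (Y Z : VF n)
    (x : Fin n → ℝ) : ℝ :=
  ∑ i, curv D (fun _ => Pi.single i 1) Y Z x i

/-- The symmetrization `Ŝ(Y,Z) = ½(S̄(Y,Z) + S̄(Z,Y))` of the Ricci tensor of the
semi-symmetric metric connection. -/
noncomputable def shat {n : ℕ} (g : (Fin n → ℝ) → Fin n → Fin n → ℝ)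
    (P : VF n) (Y Z : VF n) (x : Fin n → ℝ) : ℝ :=
  (ricci (ssCov g P) Y Z x + ricci (ssCov g P) Z Y x) / 2

/-- The covariant derivative `(D_X T)(Y,Z) = X(T(Y,Z)) − T(D_X Y, Z) − T(Y, D_X Z)` of a
`(0,2)`-tensor `T` along the connection `D`. -/
noncomputable def covT {n : ℕ} (D : VF n → VF n → VF n)
    (T : VF n → VF n → (Fin n → ℝ) → ℝ) (X Y Z : VF n) (x : Fin n → ℝ) : ℝ :=
  fderiv ℝ (T Y Z) x (X x) - T (D X Y) Z x - T Y (D X Z) x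

/-- Smoothness of a vector-field/metric-type map on `U`. -/
def SmoothVF {n : ℕ} {E : Type*} [NormedAddCommGroup E] [NormedSpace ℝ E]
    (U : Set (Fin n → ℝ)) (f : (Fin n → ℝ) → E) : Prop :=
  ContDiffOn ℝ (⊤ : ℕ∞) f U

/-- The divergence of the vector field `P`: the trace of the endomorphism `v ↦ ∇_v P`
(computed in the coordinate frame; it equals `Σᵢ g(∇_{Eᵢ}P, Eᵢ)` for any local
`g`-orthonormal frame `(E₁,…,Eₙ)`). -/
noncomputable def divP {n : ℕ} (g : (Fin n → ℝ) → Fin n → Fin n → ℝ) (P : VF n)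
    (x : Fin n → ℝ) : ℝ :=
  ∑ i, lcCov g (fun _ => Pi.single i 1) P x i

section Aux17
open Matrix
variable {n : ℕ}

lemma aux_contDiffAt_det {x : Fin n → ℝ} {m : ℕ}
    {M : (Fin n → ℝ) → Matrix (Fin m) (Fin m) ℝ}
    (h : ∀ a b, ContDiffAt ℝ (⊤ : ℕ∞) (fun y => M y a b) x) :
    ContDiffAt ℝ (⊤ : ℕ∞) (fun y => (M y).det) x := by
  simp only [Matrix.det_apply']
  exact ContDiffAt.sum fun σ _ =>
    contDiffAt_const.mul (contDiffAt_prod fun i _ => h _ _)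

lemma aux_contDiffAt_adjugate {x : Fin n → ℝ} {m : ℕ}
    {M : (Fin n → ℝ) → Matrix (Fin m) (Fin m) ℝ}
    (h : ∀ a b, ContDiffAt ℝ (⊤ : ℕ∞) (fun y => M y a b) x) (k l : Fin m) :
    ContDiffAt ℝ (⊤ : ℕ∞) (fun y => (M y).adjugate k l) x := by
  simp only [Matrix.adjugate_apply]
  apply aux_contDiffAt_det
  intro a b
  by_cases hal : a = l
  · simp only [Matrix.updateRow_apply, hal, if_pos rfl]
    exact contDiffAt_const
  · simp only [Matrix.updateRow_apply, if_neg hal]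
    exact h a b

lemma aux_contDiffAt_inv {x : Fin n → ℝ} {m : ℕ}
    {M : (Fin n → ℝ) → Matrix (Fin m) (Fin m) ℝ}
    (h : ∀ a b, ContDiffAt ℝ (⊤ : ℕ∞) (fun y => M y a b) x)
    (hdet : (M x).det ≠ 0) (k l : Fin m) :
    ContDiffAt ℝ (⊤ : ℕ∞) (fun y => (M y)⁻¹ k l) x := by
  simp only [Matrix.inv_def, Matrix.smul_apply, Ring.inverse_eq_inv, smul_eq_mul]
  exact ((aux_contDiffAt_det h).inv hdet).mul (aux_contDiffAt_adjugate h k l)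

end Aux17
section Aux17b
variable {n : ℕ} {U : Set (Fin n → ℝ)} {g : (Fin n → ℝ) → Fin n → Fin n → ℝ}
  {x : Fin n → ℝ}

lemma aux_g_entry (hU : IsOpen U) (hg : SmoothVF U g) (hx : x ∈ U) (a b : Fin n) :
    ContDiffAt ℝ (⊤ : ℕ∞) (fun y => g y a b) x :=
  contDiffAt_pi.mp (contDiffAt_pi.mp (hg.contDiffAt (hU.mem_nhds hx)) a) b

lemma aux_contDiffAt_pd {f : (Fin n → ℝ) → ℝ} (hf : ContDiffAt ℝ (⊤ : ℕ∞) f x) (i : Fin n) :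
    ContDiffAt ℝ (⊤ : ℕ∞) (fun y => pd i f y) x :=
  (hf.fderiv_right (by simp)).clm_apply contDiffAt_const

lemma aux_contDiffAt_christoffel (hU : IsOpen U) (hg : SmoothVF U g)
    (hgpos : ∀ x ∈ U, (Matrix.of (g x)).PosDef) (hx : x ∈ U) (k i j : Fin n) :
    ContDiffAt ℝ (⊤ : ℕ∞) (fun y => christoffel g y k i j) x := by
  unfold christoffel
  apply contDiffAt_const.mul
  apply ContDiffAt.sum
  intro l _
  apply ContDiffAt.mul
  · exact aux_contDiffAt_inv (fun a b => aux_g_entry hU hg hx a b)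
      (hgpos x hx).det_pos.ne' k l
  · exact ((aux_contDiffAt_pd (aux_g_entry hU hg hx j l) i).add
      (aux_contDiffAt_pd (aux_g_entry hU hg hx i l) j)).sub
      (aux_contDiffAt_pd (aux_g_entry hU hg hx i j) l)

lemma aux_contDiffAt_lcCov (hU : IsOpen U) (hg : SmoothVF U g)
    (hgpos : ∀ x ∈ U, (Matrix.of (g x)).PosDef) (hx : x ∈ U)
    {X W : VF n} (hX : ContDiffAt ℝ (⊤ : ℕ∞) X x) (hW : ContDiffAt ℝ (⊤ : ℕ∞) W x) (k : Fin n) :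
    ContDiffAt ℝ (⊤ : ℕ∞) (fun y => lcCov g X W y k) x := by
  unfold lcCov
  apply ContDiffAt.add
  · exact ((contDiffAt_pi.mp hW k).fderiv_right (by simp)).clm_apply hX
  · apply ContDiffAt.sum; intro a _
    apply ContDiffAt.sum; intro b _
    exact ((aux_contDiffAt_christoffel hU hg hgpos hx k a b).mul
      (contDiffAt_pi.mp hX a)).mul (contDiffAt_pi.mp hW b)

lemma aux_contDiffAt_gval (hU : IsOpen U) (hg : SmoothVF U g) (hx : x ∈ U)
    {V W : VF n} (hV : ContDiffAt ℝ (⊤ : ℕ∞) V x) (hW : ContDiffAt ℝ (⊤ : ℕ∞) W x) :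
    ContDiffAt ℝ (⊤ : ℕ∞) (fun y => gval g y (V y) (W y)) x := by
  unfold gval
  apply ContDiffAt.sum; intro a _
  apply ContDiffAt.sum; intro b _
  exact ((aux_g_entry hU hg hx a b).mul (contDiffAt_pi.mp hV a)).mul
    (contDiffAt_pi.mp hW b)

lemma aux_smooth_cd {f : VF n} (hU : IsOpen U) (hf : SmoothVF U f) (hx : x ∈ U) :
    ContDiffAt ℝ (⊤ : ℕ∞) f x := hf.contDiffAt (hU.mem_nhds hx)

end Aux17b
section Aux17c
variable {n : ℕ} {U : Set (Fin n → ℝ)} {g : (Fin n → ℝ) → Fin n → Fin n → ℝ}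
  {x : Fin n → ℝ}

lemma aux_fderiv_sum_apply {ι : Type*} {s : Finset ι} {A : ι → (Fin n → ℝ) → ℝ}
    (h : ∀ i ∈ s, DifferentiableAt ℝ (A i) x) (v : Fin n → ℝ) :
    fderiv ℝ (fun y => ∑ i ∈ s, A i y) x v = ∑ i ∈ s, fderiv ℝ (A i) x v := by
  rw [fderiv_fun_sum h]; simp

lemma aux_fderiv_mul_apply {c d : (Fin n → ℝ) → ℝ} (hc : DifferentiableAt ℝ c x)
    (hd : DifferentiableAt ℝ d x) (v : Fin n → ℝ) :
    fderiv ℝ (fun y => c y * d y) x v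
      = fderiv ℝ c x v * d x + c x * fderiv ℝ d x v := by
  rw [fderiv_fun_mul hc hd]; simp [smul_eq_mul]; ring

lemma aux_fderiv_pd_expand (f : (Fin n → ℝ) → ℝ) (v : Fin n → ℝ) :
    fderiv ℝ f x v = ∑ m, v m * pd m f x := by
  have hv : v = ∑ m, v m • (Pi.single m 1 : Fin n → ℝ) := by
    ext j
    simp [Pi.single_apply]
  conv_lhs => rw [hv]
  rw [map_sum]
  simp only [map_smul, pd, smul_eq_mul]

lemma aux_g_symm (hgpos : ∀ x ∈ U, (Matrix.of (g x)).PosDef) {y : Fin n → ℝ}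
    (hy : y ∈ U) (a b : Fin n) : g y a b = g y b a := by
  have h := congrFun (congrFun (hgpos y hy).1.eq a) b
  simpa [Matrix.conjTranspose_apply] using h.symm

lemma aux_pd_symm (hU : IsOpen U) (hgpos : ∀ x ∈ U, (Matrix.of (g x)).PosDef)
    (hx : x ∈ U) (m a b : Fin n) :
    pd m (fun y => g y a b) x = pd m (fun y => g y b a) x := by
  unfold pd
  congr 1
  apply Filter.EventuallyEq.fderiv_eq
  filter_upwards [hU.mem_nhds hx] with y hy
  exact aux_g_symm hgpos hy a b

lemma aux_ginv_mul (hgpos : ∀ x ∈ U, (Matrix.of (g x)).PosDef) (hx : x ∈ U)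
    (b p : Fin n) :
    (∑ l, g x b l * (Matrix.of (g x))⁻¹ l p) = if b = p then 1 else 0 := by
  have hdet : IsUnit (Matrix.of (g x)).det :=
    isUnit_iff_ne_zero.mpr (hgpos x hx).det_pos.ne'
  have h := Matrix.mul_nonsing_inv (Matrix.of (g x)) hdet
  simpa [Matrix.mul_apply, Matrix.one_apply, Matrix.of_apply]
    using congrFun (congrFun h b) p

end Aux17c
section Aux17d
variable {n : ℕ} {U : Set (Fin n → ℝ)} {g : (Fin n → ℝ) → Fin n → Fin n → ℝ}
  {x : Fin n → ℝ}

lemma aux_mul_sum2_mul (A B : ℝ) (t : Fin n → Fin n → ℝ) :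
    A * (∑ c, ∑ d, t c d) * B = ∑ c, ∑ d, A * t c d * B := by
  simp only [Finset.mul_sum, Finset.sum_mul]

lemma aux_sum4_collapse (F : Fin n → Fin n → Fin n → Fin n → ℝ) :
    (∑ p : Fin n × Fin n × Fin n × Fin n, F p.1 p.2.1 p.2.2.1 p.2.2.2)
      = ∑ a, ∑ b, ∑ c, ∑ d, F a b c d := by
  rw [Fintype.sum_prod_type]
  refine Finset.sum_congr rfl fun a _ => ?_
  rw [Fintype.sum_prod_type]
  refine Finset.sum_congr rfl fun b _ => ?_
  rw [Fintype.sum_prod_type]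

lemma aux_sum4A (S T : Fin n → Fin n → Fin n → Fin n → ℝ)
    (h : ∀ a b c d, S a b c d = T d b c a) :
    ∑ a, ∑ b, ∑ c, ∑ d, S a b c d = ∑ a, ∑ b, ∑ c, ∑ d, T a b c d := by
  rw [← aux_sum4_collapse S, ← aux_sum4_collapse T]
  exact Fintype.sum_equiv
    ⟨fun p => (p.2.2.2, p.2.1, p.2.2.1, p.1),
     fun p => (p.2.2.2, p.2.1, p.2.2.1, p.1), fun p => rfl, fun p => rfl⟩
    _ _ (fun p => h p.1 p.2.1 p.2.2.1 p.2.2.2)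

lemma aux_sum4B (S T : Fin n → Fin n → Fin n → Fin n → ℝ)
    (h : ∀ a b c d, S a b c d = T a d c b) :
    ∑ a, ∑ b, ∑ c, ∑ d, S a b c d = ∑ a, ∑ b, ∑ c, ∑ d, T a b c d := by
  rw [← aux_sum4_collapse S, ← aux_sum4_collapse T]
  exact Fintype.sum_equiv
    ⟨fun p => (p.1, p.2.2.2, p.2.2.1, p.2.1),
     fun p => (p.1, p.2.2.2, p.2.2.1, p.2.1), fun p => rfl, fun p => rfl⟩
    _ _ (fun p => h p.1 p.2.1 p.2.2.1 p.2.2.2)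

lemma aux_contract (hU : IsOpen U) (hg : SmoothVF U g)
    (hgpos : ∀ x ∈ U, (Matrix.of (g x)).PosDef) (hx : x ∈ U) (m a b : Fin n) :
    ∑ l, g x l b * christoffel g x l m a
      = (1/2) * (pd m (fun y => g y a b) x + pd a (fun y => g y m b) x
          - pd b (fun y => g y m a) x) := by
  set D : Fin n → ℝ := fun p =>
    pd m (fun y => g y a p) x + pd a (fun y => g y m p) x - pd p (fun y => g y m a) x
    with hD
  have step1 : ∑ l, g x l b * christoffel g x l m a
      = ∑ l, ∑ p, (1/2) * (g x b l * ((Matrix.of (g x))⁻¹ l p * D p)) := by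
    refine Finset.sum_congr rfl fun l _ => ?_
    rw [aux_g_symm hgpos hx l b]
    unfold christoffel
    rw [Finset.mul_sum, Finset.mul_sum]
    refine Finset.sum_congr rfl fun p _ => ?_
    ring
  rw [step1, Finset.sum_comm]
  have step2 : ∀ p, ∑ l, (1/2) * (g x b l * ((Matrix.of (g x))⁻¹ l p * D p))
      = (1/2) * ((if b = p then 1 else 0) * D p) := by
    intro p
    rw [← aux_ginv_mul hgpos hx b p, Finset.sum_mul, Finset.mul_sum]
    refine Finset.sum_congr rfl fun l _ => ?_
    ring
  simp only [step2]
  simp [Finset.sum_ite_eq, hD]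

lemma aux_pd_g (hU : IsOpen U) (hg : SmoothVF U g)
    (hgpos : ∀ x ∈ U, (Matrix.of (g x)).PosDef) (hx : x ∈ U) (m a b : Fin n) :
    pd m (fun y => g y a b) x
      = (∑ l, g x l b * christoffel g x l m a)
        + (∑ l, g x a l * christoffel g x l m b) := by
  have h2 : ∑ l, g x a l * christoffel g x l m b
      = ∑ l, g x l a * christoffel g x l m b := by
    refine Finset.sum_congr rfl fun l _ => ?_
    rw [aux_g_symm hgpos hx a l]
  rw [aux_contract hU hg hgpos hx m a b, h2, aux_contract hU hg hgpos hx m b a,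
    aux_pd_symm hU hgpos hx m b a]
  ring

end Aux17d
section Aux17e
variable {n : ℕ} {U : Set (Fin n → ℝ)} {g : (Fin n → ℝ) → Fin n → Fin n → ℝ}
  {x : Fin n → ℝ}

lemma aux_dg_VW (hU : IsOpen U) (hg : SmoothVF U g)
    (hgpos : ∀ x ∈ U, (Matrix.of (g x)).PosDef) (hx : x ∈ U)
    (Xv V W : Fin n → ℝ) :
    ∑ a, ∑ b, fderiv ℝ (fun y => g y a b) x Xv * V a * W b
      = (∑ a, ∑ b, g x a b * (∑ c, ∑ d, christoffel g x a c d * Xv c * V d) * W b)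
        + (∑ a, ∑ b, g x a b * V a * (∑ c, ∑ d, christoffel g x b c d * Xv c * W d)) := by
  have lhs1 : ∑ a, ∑ b, fderiv ℝ (fun y => g y a b) x Xv * V a * W b
      = (∑ a, ∑ b, ∑ c, ∑ d, Xv c * (g x d b * christoffel g x d c a) * V a * W b)
        + (∑ a, ∑ b, ∑ c, ∑ d, Xv c * (g x a d * christoffel g x d c b) * V a * W b) := by
    rw [← Finset.sum_add_distrib]
    refine Finset.sum_congr rfl fun a _ => ?_
    rw [← Finset.sum_add_distrib]
    refine Finset.sum_congr rfl fun b _ => ?_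
    rw [aux_fderiv_pd_expand, Finset.sum_mul, Finset.sum_mul, ← Finset.sum_add_distrib]
    refine Finset.sum_congr rfl fun c _ => ?_
    rw [aux_pd_g hU hg hgpos hx c a b, mul_add, add_mul, add_mul]
    congr 1
    · rw [Finset.mul_sum, Finset.sum_mul, Finset.sum_mul]
    · rw [Finset.mul_sum, Finset.sum_mul, Finset.sum_mul]
  have r1 : (∑ a, ∑ b, g x a b * (∑ c, ∑ d, christoffel g x a c d * Xv c * V d) * W b)
      = ∑ a, ∑ b, ∑ c, ∑ d, g x a b * (christoffel g x a c d * Xv c * V d) * W b := by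
    refine Finset.sum_congr rfl fun a _ => Finset.sum_congr rfl fun b _ => ?_
    simp only [Finset.mul_sum, Finset.sum_mul]
  have r2 : (∑ a, ∑ b, g x a b * V a * (∑ c, ∑ d, christoffel g x b c d * Xv c * W d))
      = ∑ a, ∑ b, ∑ c, ∑ d, g x a b * V a * (christoffel g x b c d * Xv c * W d) := by
    refine Finset.sum_congr rfl fun a _ => Finset.sum_congr rfl fun b _ => ?_
    simp only [Finset.mul_sum]
  rw [lhs1, r1, r2]
  congr 1
  · exact aux_sum4A
      (fun a b c d => Xv c * (g x d b * christoffel g x d c a) * V a * W b)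
      (fun a b c d => g x a b * (christoffel g x a c d * Xv c * V d) * W b)
      (fun a b c d => by ring)
  · exact aux_sum4B
      (fun a b c d => Xv c * (g x a d * christoffel g x d c b) * V a * W b)
      (fun a b c d => g x a b * V a * (christoffel g x b c d * Xv c * W d))
      (fun a b c d => by ring)

lemma aux_compat (hU : IsOpen U) (hg : SmoothVF U g)
    (hgpos : ∀ x ∈ U, (Matrix.of (g x)).PosDef) (hx : x ∈ U)
    {V W : VF n} (hV : ContDiffAt ℝ (⊤ : ℕ∞) V x) (hW : ContDiffAt ℝ (⊤ : ℕ∞) W x) (X : VF n) :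
    fderiv ℝ (fun y => gval g y (V y) (W y)) x (X x)
      = gval g x (lcCov g X V x) (W x) + gval g x (V x) (lcCov g X W x) := by
  have hga : ∀ a b, DifferentiableAt ℝ (fun y => g y a b) x :=
    fun a b => (aux_g_entry hU hg hx a b).differentiableAt (by simp)
  have hVa : ∀ a, DifferentiableAt ℝ (fun y => V y a) x :=
    fun a => (contDiffAt_pi.mp hV a).differentiableAt (by simp)
  have hWa : ∀ a, DifferentiableAt ℝ (fun y => W y a) x :=
    fun a => (contDiffAt_pi.mp hW a).differentiableAt (by simp)
  have hprod : ∀ a b, DifferentiableAt ℝ (fun y => g y a b * V y a * W y b) x :=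
    fun a b => ((hga a b).mul (hVa a)).mul (hWa b)
  have h1 : fderiv ℝ (fun y => gval g y (V y) (W y)) x (X x)
      = ∑ a, ∑ b, (fderiv ℝ (fun y => g y a b) x (X x) * V x a * W x b
          + g x a b * fderiv ℝ (fun y => V y a) x (X x) * W x b
          + g x a b * V x a * fderiv ℝ (fun y => W y b) x (X x)) := by
    unfold gval
    rw [aux_fderiv_sum_apply (fun a _ => DifferentiableAt.fun_sum fun b _ => hprod a b) (X x)]
    refine Finset.sum_congr rfl fun a _ => ?_
    rw [aux_fderiv_sum_apply (fun b _ => hprod a b) (X x)]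
    refine Finset.sum_congr rfl fun b _ => ?_
    rw [aux_fderiv_mul_apply (c := fun y => g y a b * V y a) ((hga a b).mul (hVa a)) (hWa b),
      aux_fderiv_mul_apply (hga a b) (hVa a)]
    ring
  have h2 : gval g x (lcCov g X V x) (W x)
      = (∑ a, ∑ b, g x a b * fderiv ℝ (fun y => V y a) x (X x) * W x b)
        + ∑ a, ∑ b, g x a b * (∑ c, ∑ d, christoffel g x a c d * X x c * V x d) * W x b := by
    unfold gval lcCov
    rw [← Finset.sum_add_distrib]
    refine Finset.sum_congr rfl fun a _ => ?_
    rw [← Finset.sum_add_distrib]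
    refine Finset.sum_congr rfl fun b _ => ?_
    ring
  have h3 : gval g x (V x) (lcCov g X W x)
      = (∑ a, ∑ b, g x a b * V x a * fderiv ℝ (fun y => W y b) x (X x))
        + ∑ a, ∑ b, g x a b * V x a * (∑ c, ∑ d, christoffel g x b c d * X x c * W x d) := by
    unfold gval lcCov
    rw [← Finset.sum_add_distrib]
    refine Finset.sum_congr rfl fun a _ => ?_
    rw [← Finset.sum_add_distrib]
    refine Finset.sum_congr rfl fun b _ => ?_
    ring
  rw [h1, h2, h3]
  simp only [Finset.sum_add_distrib]
  rw [aux_dg_VW hU hg hgpos hx (X x) (V x) (W x)]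
  ring
end Aux17e
section Aux17f
variable {n : ℕ} {U : Set (Fin n → ℝ)} {g : (Fin n → ℝ) → Fin n → Fin n → ℝ}
  {x : Fin n → ℝ}

lemma aux_gval_symm (hgpos : ∀ x ∈ U, (Matrix.of (g x)).PosDef) (hx : x ∈ U)
    (v w : Fin n → ℝ) : gval g x v w = gval g x w v := by
  unfold gval
  rw [Finset.sum_comm]
  refine Finset.sum_congr rfl fun a _ => Finset.sum_congr rfl fun b _ => ?_
  rw [aux_g_symm hgpos hx b a]
  ring

lemma aux_gval_comb_left (a b c w : Fin n → ℝ) (s t : ℝ) :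
    gval g x (fun k => a k + s * b k - t * c k) w
      = gval g x a w + s * gval g x b w - t * gval g x c w := by
  unfold gval
  simp only [Finset.mul_sum, ← Finset.sum_add_distrib, ← Finset.sum_sub_distrib]
  refine Finset.sum_congr rfl fun i _ => Finset.sum_congr rfl fun j _ => ?_
  ring

lemma aux_gval_comb_right (a b c w : Fin n → ℝ) (s t : ℝ) :
    gval g x w (fun k => a k + s * b k - t * c k)
      = gval g x w a + s * gval g x w b - t * gval g x w c := by
  unfold gval
  simp only [Finset.mul_sum, ← Finset.sum_add_distrib, ← Finset.sum_sub_distrib]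
  refine Finset.sum_congr rfl fun i _ => Finset.sum_congr rfl fun j _ => ?_
  ring

lemma aux_gval_sub_left (a b w : Fin n → ℝ) :
    gval g x (fun k => a k - b k) w = gval g x a w - gval g x b w := by
  unfold gval
  simp only [← Finset.sum_sub_distrib]
  refine Finset.sum_congr rfl fun i _ => Finset.sum_congr rfl fun j _ => ?_
  ring

lemma aux_gval_trace (v w : Fin n → ℝ) :
    ∑ i, gval g x (Pi.single i 1) v * w i = gval g x w v := by
  unfold gval
  simp only [Finset.sum_mul]
  conv_lhs => rw [Finset.sum_comm]
  refine Finset.sum_congr rfl fun a _ => ?_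
  conv_lhs => rw [Finset.sum_comm]
  refine Finset.sum_congr rfl fun b _ => ?_
  simp only [Pi.single_apply, mul_ite, mul_one, mul_zero, ite_mul, zero_mul,
    Finset.sum_ite_eq, Finset.mem_univ, if_true]
  ring

lemma aux_lcCov_trace (Yv : Fin n → ℝ) (W : VF n) (k : Fin n) :
    ∑ i, Yv i * lcCov g (fun _ => Pi.single i 1) W x k
      = lcCov g (fun _ => Yv) W x k := by
  unfold lcCov
  simp only [mul_add, Finset.sum_add_distrib]
  congr 1
  · rw [aux_fderiv_pd_expand (fun y => W y k) Yv]
    refine Finset.sum_congr rfl fun m _ => ?_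
    simp only [pd]
  · simp only [Finset.mul_sum]
    conv_lhs => rw [Finset.sum_comm]
    refine Finset.sum_congr rfl fun a _ => ?_
    conv_lhs => rw [Finset.sum_comm]
    refine Finset.sum_congr rfl fun b _ => ?_
    simp only [Pi.single_apply, mul_ite, mul_one, mul_zero, ite_mul, zero_mul,
      Finset.sum_ite_eq, Finset.mem_univ, if_true]
    ring

lemma aux_christoffel_symm (hU : IsOpen U)
    (hgpos : ∀ x ∈ U, (Matrix.of (g x)).PosDef) (hx : x ∈ U) (k i j : Fin n) :
    christoffel g x k i j = christoffel g x k j i := by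
  unfold christoffel
  congr 1
  refine Finset.sum_congr rfl fun l _ => ?_
  rw [aux_pd_symm hU hgpos hx l i j]
  ring

lemma aux_torsion (hU : IsOpen U)
    (hgpos : ∀ x ∈ U, (Matrix.of (g x)).PosDef) (hx : x ∈ U)
    (X Yf : VF n) (k : Fin n) :
    lie X Yf x k = lcCov g X Yf x k - lcCov g Yf X x k := by
  unfold lie lcCov
  have h : ∑ a, ∑ b, christoffel g x k a b * X x a * Yf x b
      = ∑ a, ∑ b, christoffel g x k a b * Yf x a * X x b := by
    rw [Finset.sum_comm]
    refine Finset.sum_congr rfl fun a _ => Finset.sum_congr rfl fun b _ => ?_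
    rw [aux_christoffel_symm hU hgpos hx k b a]
    ring
  rw [h]
  ring

lemma aux_fderiv_comb {A0 W1 W2 f1 f2 : (Fin n → ℝ) → ℝ}
    (hA0 : DifferentiableAt ℝ A0 x) (hf1 : DifferentiableAt ℝ f1 x)
    (hW1 : DifferentiableAt ℝ W1 x) (hf2 : DifferentiableAt ℝ f2 x)
    (hW2 : DifferentiableAt ℝ W2 x) (v : Fin n → ℝ) :
    fderiv ℝ (fun y => A0 y + f1 y * W1 y - f2 y * W2 y) x v
      = fderiv ℝ A0 x v + (fderiv ℝ f1 x v * W1 x + f1 x * fderiv ℝ W1 x v)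
        - (fderiv ℝ f2 x v * W2 x + f2 x * fderiv ℝ W2 x v) := by
  have h1 : fderiv ℝ (fun y => A0 y + f1 y * W1 y - f2 y * W2 y) x
      = fderiv ℝ (fun y => A0 y + f1 y * W1 y) x - fderiv ℝ (fun y => f2 y * W2 y) x :=
    fderiv_sub (hA0.add (hf1.mul hW1)) (hf2.mul hW2)
  rw [h1]
  simp only [ContinuousLinearMap.sub_apply]
  rw [fderiv_fun_add (g := fun y => f1 y * W1 y) hA0 (hf1.mul hW1)]
  simp only [ContinuousLinearMap.add_apply]
  rw [aux_fderiv_mul_apply hf1 hW1, aux_fderiv_mul_apply hf2 hW2]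

end Aux17f
section Aux17g
variable {n : ℕ} {U : Set (Fin n → ℝ)} {g : (Fin n → ℝ) → Fin n → Fin n → ℝ}
  {P : VF n} {x : Fin n → ℝ}

lemma aux_lcCov_ssCov (hU : IsOpen U) (hg : SmoothVF U g)
    (hgpos : ∀ x ∈ U, (Matrix.of (g x)).PosDef) (hx : x ∈ U)
    {A B : VF n} (hA : ContDiffAt ℝ (⊤ : ℕ∞) A x) (hB : ContDiffAt ℝ (⊤ : ℕ∞) B x)
    (hP : ContDiffAt ℝ (⊤ : ℕ∞) P x) (X : VF n) (k : Fin n) :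
    lcCov g X (ssCov g P A B) x k
      = lcCov g X (lcCov g A B) x k
        + fderiv ℝ (fun y => gval g y (B y) (P y)) x (X x) * A x k
        + gval g x (B x) (P x) * lcCov g X A x k
        - fderiv ℝ (fun y => gval g y (A y) (B y)) x (X x) * P x k
        - gval g x (A x) (B x) * lcCov g X P x k := by
  have d1 : DifferentiableAt ℝ (fun y => lcCov g A B y k) x :=
    (aux_contDiffAt_lcCov hU hg hgpos hx hA hB k).differentiableAt (by simp)
  have d2 : DifferentiableAt ℝ (fun y => gval g y (B y) (P y)) x :=
    (aux_contDiffAt_gval hU hg hx hB hP).differentiableAt (by simp)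
  have d3 : DifferentiableAt ℝ (fun y => gval g y (A y) (B y)) x :=
    (aux_contDiffAt_gval hU hg hx hA hB).differentiableAt (by simp)
  have d4 : DifferentiableAt ℝ (fun y => A y k) x :=
    (contDiffAt_pi.mp hA k).differentiableAt (by simp)
  have d5 : DifferentiableAt ℝ (fun y => P y k) x :=
    (contDiffAt_pi.mp hP k).differentiableAt (by simp)
  have lhs_eq : lcCov g X (ssCov g P A B) x k
      = fderiv ℝ (fun y => lcCov g A B y k
            + gval g y (B y) (P y) * A y k - gval g y (A y) (B y) * P y k) x (X x)
        + ∑ a, ∑ b, christoffel g x k a b * X x a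
            * (lcCov g A B x b + gval g x (B x) (P x) * A x b
              - gval g x (A x) (B x) * P x b) := rfl
  have hΓ : ∑ a, ∑ b, christoffel g x k a b * X x a
        * (lcCov g A B x b + gval g x (B x) (P x) * A x b
          - gval g x (A x) (B x) * P x b)
      = (∑ a, ∑ b, christoffel g x k a b * X x a * lcCov g A B x b)
        + gval g x (B x) (P x) * (∑ a, ∑ b, christoffel g x k a b * X x a * A x b)
        - gval g x (A x) (B x) * (∑ a, ∑ b, christoffel g x k a b * X x a * P x b) := by
    simp only [Finset.mul_sum, ← Finset.sum_add_distrib, ← Finset.sum_sub_distrib]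
    refine Finset.sum_congr rfl fun a _ => Finset.sum_congr rfl fun b _ => ?_
    ring
  rw [lhs_eq, aux_fderiv_comb d1 d2 d4 d3 d5, hΓ]
  have e1 : lcCov g X (lcCov g A B) x k
      = fderiv ℝ (fun y => lcCov g A B y k) x (X x)
        + ∑ a, ∑ b, christoffel g x k a b * X x a * lcCov g A B x b := rfl
  have e2 : lcCov g X A x k
      = fderiv ℝ (fun y => A y k) x (X x)
        + ∑ a, ∑ b, christoffel g x k a b * X x a * A x b := rfl
  have e3 : lcCov g X P x k
      = fderiv ℝ (fun y => P y k) x (X x)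
        + ∑ a, ∑ b, christoffel g x k a b * X x a * P x b := rfl
  rw [e1, e2, e3]
  ring

end Aux17g
section Aux17h
variable {n : ℕ} {U : Set (Fin n → ℝ)} {g : (Fin n → ℝ) → Fin n → Fin n → ℝ}
  {P : VF n} {x : Fin n → ℝ}

lemma aux_gval_sum_right (v : Fin n → ℝ) {ι : Type*} (s : Finset ι) (c : ι → ℝ)
    (w : ι → Fin n → ℝ) :
    ∑ i ∈ s, c i * gval g x v (w i) = gval g x v (fun b => ∑ i ∈ s, c i * w i b) := by
  unfold gval
  simp only [Finset.mul_sum]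
  conv_lhs => rw [Finset.sum_comm]
  refine Finset.sum_congr rfl fun a _ => ?_
  conv_lhs => rw [Finset.sum_comm]
  refine Finset.sum_congr rfl fun b _ => Finset.sum_congr rfl fun i _ => by ring

lemma aux_trace_cov (v Yv : Fin n → ℝ) (W : VF n) :
    ∑ i, gval g x v (lcCov g (fun _ => Pi.single i 1) W x) * Yv i
      = gval g x v (lcCov g (fun _ => Yv) W x) := by
  have h1 : ∀ i : Fin n, gval g x v (lcCov g (fun _ => Pi.single i 1) W x) * Yv i
      = Yv i * gval g x v (lcCov g (fun _ => Pi.single i 1) W x) :=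
    fun i => mul_comm _ _
  simp only [h1]
  rw [aux_gval_sum_right]
  congr 1
  funext b
  exact aux_lcCov_trace Yv W b

lemma aux_key (hU : IsOpen U) (hg : SmoothVF U g)
    (hgpos : ∀ x ∈ U, (Matrix.of (g x)).PosDef) (hx : x ∈ U)
    {Y Z : VF n} (hYx : ContDiffAt ℝ (⊤ : ℕ∞) Y x) (hZx : ContDiffAt ℝ (⊤ : ℕ∞) Z x)
    (hPx : ContDiffAt ℝ (⊤ : ℕ∞) P x) (i : Fin n) :
    curv (ssCov g P) (fun _ => Pi.single i 1) Y Z x i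
      = curv (lcCov g) (fun _ => Pi.single i 1) Y Z x i
        + (gval g x (Z x) (lcCov g (fun _ => Pi.single i 1) P x) * Y x i
          - gval g x (Pi.single i 1) (P x) * Y x i * gval g x (Z x) (P x)
          + gval g x (Pi.single i 1) (Z x) * Y x i * gval g x (P x) (P x)
          + (gval g x (Z x) (P x) * gval g x (Y x) (P x)
            - gval g x (Y x) (Z x) * gval g x (P x) (P x)
            - gval g x (Z x) (lcCov g Y P x))
          - gval g x (Y x) (Z x) * lcCov g (fun _ => Pi.single i 1) P x i
          + gval g x (Pi.single i 1) (Z x) * lcCov g Y P x i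
          + (gval g x (Pi.single i 1) (P x) * P x i * gval g x (Y x) (Z x)
            - gval g x (Pi.single i 1) (Z x) * P x i * gval g x (Y x) (P x))) := by
  have hlie : lie (fun _ => Pi.single i 1) Y x = fun k =>
      lcCov g (fun _ => Pi.single i 1) Y x k - lcCov g Y (fun _ => Pi.single i 1) x k :=
    funext fun k => aux_torsion hU hgpos hx _ Y k
  have c1 : fderiv ℝ (fun y => gval g y (Z y) (P y)) x (Pi.single i 1)
      = gval g x (lcCov g (fun _ => Pi.single i 1) Z x) (P x)
        + gval g x (Z x) (lcCov g (fun _ => Pi.single i 1) P x) :=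
    aux_compat hU hg hgpos hx hZx hPx (fun _ => Pi.single i 1)
  have c2 : fderiv ℝ (fun y => gval g y (Y y) (Z y)) x (Pi.single i 1)
      = gval g x (lcCov g (fun _ => Pi.single i 1) Y x) (Z x)
        + gval g x (Y x) (lcCov g (fun _ => Pi.single i 1) Z x) :=
    aux_compat hU hg hgpos hx hYx hZx (fun _ => Pi.single i 1)
  have c3 : fderiv ℝ (fun y => gval g y (Z y) (P y)) x (Y x)
      = gval g x (lcCov g Y Z x) (P x) + gval g x (Z x) (lcCov g Y P x) :=
    aux_compat hU hg hgpos hx hZx hPx Y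
  have c4 : fderiv ℝ (fun y => gval g y (Pi.single i 1) (Z y)) x (Y x)
      = gval g x (lcCov g Y (fun _ => Pi.single i 1) x) (Z x)
        + gval g x (Pi.single i 1) (lcCov g Y Z x) :=
    aux_compat hU hg hgpos hx contDiffAt_const hZx Y
  have s1 : gval g x (Y x) (Pi.single i 1) = gval g x (Pi.single i 1) (Y x) :=
    aux_gval_symm hgpos hx _ _
  have hss1 : ssCov g P Y Z x = fun k =>
      lcCov g Y Z x k + gval g x (Z x) (P x) * Y x k
        - gval g x (Y x) (Z x) * P x k := rfl
  have hss2 : ssCov g P (fun _ => Pi.single i 1) Z x = fun k =>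
      lcCov g (fun _ => Pi.single i 1) Z x k + gval g x (Z x) (P x) * (Pi.single i 1 : Fin n → ℝ) k
        - gval g x (Pi.single i 1) (Z x) * P x k := rfl
  simp only [curv, ssCov]
  rw [aux_lcCov_ssCov hU hg hgpos hx hYx hZx hPx (fun _ => Pi.single i 1) i,
    aux_lcCov_ssCov hU hg hgpos hx contDiffAt_const hZx hPx Y i]
  simp only [hlie, c1, c2, c3, c4, hss1, hss2, aux_gval_comb_left, aux_gval_comb_right,
    aux_gval_sub_left, Pi.single_eq_same, s1]
  ring

end Aux17h

/-- On an open `U ⊆ ℝⁿ` (`n ≥ 3`) with Riemannian metric `g`, Levi-Civita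
connection `∇`, vector field `P`, `π(X) = g(X,P)`, semi-symmetric metric connection `∇̄`,
`S = Ric_∇`, `S̄ = Ric_∇̄`: for all vector fields `Y, Z` on `U`,
`S̄(Y,Z) = S(Y,Z) − (n−2)(∇_Y π)(Z) + (n−2)π(Y)π(Z) − [(n−2)π(P) + div P]·g(Y,Z)`,
where `(∇_Y π)(Z) = g(∇_Y P, Z)`. -/
theorem statement17 (n : ℕ) (hn : 3 ≤ n)
    (U : Set (Fin n → ℝ)) (hU : IsOpen U)
    (g : (Fin n → ℝ) → Fin n → Fin n → ℝ) (hg : SmoothVF U g)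
    (hgpos : ∀ x ∈ U, (Matrix.of (g x)).PosDef)
    (P : VF n) (hP : SmoothVF U P) :
    ∀ Y Z : VF n, SmoothVF U Y → SmoothVF U Z → ∀ x ∈ U,
      ricci (ssCov g P) Y Z x =
        ricci (lcCov g) Y Z x
          - ((n : ℝ) - 2) * gval g x (lcCov g Y P x) (Z x)
          + ((n : ℝ) - 2) * (gval g x (Y x) (P x) * gval g x (Z x) (P x))
          - (((n : ℝ) - 2) * gval g x (P x) (P x) + divP g P x) * gval g x (Y x) (Z x) := by
  intro Y Z hY hZ x hx
  have hYx : ContDiffAt ℝ (⊤ : ℕ∞) Y x := hY.contDiffAt (hU.mem_nhds hx)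
  have hZx : ContDiffAt ℝ (⊤ : ℕ∞) Z x := hZ.contDiffAt (hU.mem_nhds hx)
  have hPx : ContDiffAt ℝ (⊤ : ℕ∞) P x := hP.contDiffAt (hU.mem_nhds hx)
  have e1 : ∑ i : Fin n, gval g x (Z x) (lcCov g (fun _ => Pi.single i 1) P x) * Y x i
      = gval g x (Z x) (lcCov g Y P x) := by
    rw [aux_trace_cov]
    rfl
  have e2 : ∑ i : Fin n,
        gval g x (Pi.single i 1) (P x) * Y x i * gval g x (Z x) (P x)
      = gval g x (Y x) (P x) * gval g x (Z x) (P x) := by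
    rw [← Finset.sum_mul, aux_gval_trace]
  have e3 : ∑ i : Fin n,
        gval g x (Pi.single i 1) (Z x) * Y x i * gval g x (P x) (P x)
      = gval g x (Y x) (Z x) * gval g x (P x) (P x) := by
    rw [← Finset.sum_mul, aux_gval_trace]
  have e5 : ∑ i : Fin n,
        gval g x (Y x) (Z x) * lcCov g (fun _ => Pi.single i 1) P x i
      = gval g x (Y x) (Z x) * divP g P x := by
    rw [← Finset.mul_sum]
    rfl
  have e6 : ∑ i : Fin n, gval g x (Pi.single i 1) (Z x) * lcCov g Y P x i
      = gval g x (lcCov g Y P x) (Z x) := aux_gval_trace _ _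
  have e7 : ∑ i : Fin n,
        gval g x (Pi.single i 1) (P x) * P x i * gval g x (Y x) (Z x)
      = gval g x (P x) (P x) * gval g x (Y x) (Z x) := by
    rw [← Finset.sum_mul, aux_gval_trace]
  have e8 : ∑ i : Fin n,
        gval g x (Pi.single i 1) (Z x) * P x i * gval g x (Y x) (P x)
      = gval g x (P x) (Z x) * gval g x (Y x) (P x) := by
    rw [← Finset.sum_mul, aux_gval_trace]
  have s2 : gval g x (P x) (Z x) = gval g x (Z x) (P x) := aux_gval_symm hgpos hx _ _
  have s3 : gval g x (Z x) (lcCov g Y P x) = gval g x (lcCov g Y P x) (Z x) :=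
    aux_gval_symm hgpos hx _ _
  unfold ricci
  rw [Finset.sum_congr rfl fun i _ => aux_key hU hg hgpos hx hYx hZx hPx i,
    Finset.sum_add_distrib]
  simp only [Finset.sum_add_distrib, Finset.sum_sub_distrib]
  rw [e1, e2, e3, e5, e6, e7, e8, s2, s3]
  simp only [Finset.sum_const, Finset.card_univ, Fintype.card_fin, nsmul_eq_mul]
  ring
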